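/- Let X be a topological space, x₀ ∈ X, and suppose x₀ admits a neighbourhood basis 𝒱 of open sets, while every point x ≠ x₀ admits a neighbourhood basis of open sets whose closures avoid x₀. Then the collection of subsets of C₁(n, X) of the form (V₁ × ⋯ × Vₙ) ∩ C₁(n, X), where each Vᵢ is either an open set with closure avoiding x₀ or an element of 𝒱, the sets with closure avoiding x₀ are pairwise disjoint, and all the Vᵢ from 𝒱 are equal, is a basis for the subspace topology on C₁(n, X). -/
import Mathlib


open Set

/-- The configuration space `C₁(n, X)` of `n`-tuples of points of `X`, distinct except
that repetitions of the basepoint `x₀` are allowed. -/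
def C1 (n : ℕ) (X : Type*) (x₀ : X) : Set (Fin n → X) :=
  {g | ∀ i j : Fin n, i ≠ j → g i = g j → g i = x₀}

/-- If `x₀` has a neighbourhood basis `𝒱` of open sets and every other point has a
neighbourhood basis of open sets whose closures avoid `x₀`, then the products
`(V₁ × ⋯ × Vₙ) ∩ C₁(n,X)` — with each `Vᵢ` either an open set with closure avoiding `x₀`
or an element of `𝒱`, the former pairwise disjoint and the latter all equal — form a basis
for the subspace topology on `C₁(n, X)`. -/
theorem c1_basis (n : ℕ) (X : Type*) [TopologicalSpace X] [T2Space X] (x₀ : X)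
    (𝒱 : Set (Set X))
    (h𝒱open : ∀ V ∈ 𝒱, IsOpen V ∧ x₀ ∈ V)
    (h𝒱basis : ∀ U : Set X, IsOpen U → x₀ ∈ U → ∃ V ∈ 𝒱, V ⊆ U)
    (hx : ∀ x : X, x ≠ x₀ → ∀ U : Set X, IsOpen U → x ∈ U →
      ∃ W : Set X, IsOpen W ∧ x ∈ W ∧ W ⊆ U ∧ x₀ ∉ closure W) :
    TopologicalSpace.IsTopologicalBasis
      {T : Set ↥(C1 n X x₀) | ∃ (V : Fin n → Set X) (c : Fin n → Bool),
        (∀ i, c i = true → V i ∈ 𝒱) ∧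
        (∀ i, c i = false → IsOpen (V i) ∧ x₀ ∉ closure (V i)) ∧
        (∀ i j, i ≠ j → c i = false → c j = false → Disjoint (V i) (V j)) ∧
        (∀ i j, c i = true → c j = true → V i = V j) ∧
        T = Subtype.val ⁻¹' Set.pi Set.univ V} := by
  classical
  apply TopologicalSpace.isTopologicalBasis_of_isOpen_of_nhds
  · rintro T ⟨V, c, h1, h2, -, -, rfl⟩
    refine (isOpen_set_pi finite_univ ?_).preimage continuous_subtype_val
    intro i _
    rcases Bool.eq_false_or_eq_true (c i) with hc | hc
    · exact (h𝒱open _ (h1 i hc)).1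
    · exact (h2 i hc).1
  · intro g u hgu hu
    obtain ⟨O, hO, rfl⟩ := isOpen_induced_iff.mp hu
    have hgO : (g : Fin n → X) ∈ O := hgu
    obtain ⟨I, w, hw, hIw⟩ := isOpen_pi_iff.mp hO _ hgO
    set W : Fin n → Set X := fun i => if i ∈ I then w i else univ with hWdef
    have hWopen : ∀ i, IsOpen (W i) := by
      intro i; simp only [hWdef]; split
      · exact (hw i ‹_›).1
      · exact isOpen_univ
    have hWmem : ∀ i, (g : Fin n → X) i ∈ W i := by
      intro i; simp only [hWdef]; split
      · exact (hw i ‹_›).2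
      · trivial
    have hWsub : ∀ f : Fin n → X, (∀ i, f i ∈ W i) → f ∈ O := by
      intro f hf
      apply hIw
      intro i hi
      have := hf i
      simp only [hWdef] at this
      rwa [if_pos (Finset.mem_coe.mp hi)] at this
    have gC1 := g.2
    have sep : ∀ i j : Fin n, ∃ A B : Set X, IsOpen A ∧ IsOpen B ∧
        (g:Fin n→X) i ∈ A ∧ (g:Fin n→X) j ∈ B ∧
        ((g:Fin n→X) i ≠ (g:Fin n→X) j → Disjoint A B) := by
      intro i j
      by_cases h : (g:Fin n→X) i ≠ (g:Fin n→X) j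
      · obtain ⟨A, B, hA, hB, hgA, hgB, hAB⟩ := t2_separation h
        exact ⟨A, B, hA, hB, hgA, hgB, fun _ => hAB⟩
      · exact ⟨univ, univ, isOpen_univ, isOpen_univ, trivial, trivial,
          fun h' => absurd h' h⟩
    choose A B hAopen hBopen hgA hgB hdisj using sep
    set U : Fin n → Set X := fun i => W i ∩ ⋂ j, (A i j ∩ B j i) with hUdef
    have hUopen : ∀ i, IsOpen (U i) := fun i =>
      (hWopen i).inter (isOpen_iInter_of_finite fun j => (hAopen i j).inter (hBopen j i))
    have hUmem : ∀ i, (g:Fin n→X) i ∈ U i := fun i =>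
      ⟨hWmem i, mem_iInter.mpr fun j => ⟨hgA i j, hgB j i⟩⟩
    have hUdisj : ∀ i j, (g:Fin n→X) i ≠ (g:Fin n→X) j → Disjoint (U i) (U j) := by
      intro i j hne'
      have h1 : U i ⊆ A i j := fun x hx => (mem_iInter.mp hx.2 j).1
      have h2 : U j ⊆ B i j := fun x hx => (mem_iInter.mp hx.2 i).2
      exact (hdisj i j hne').mono h1 h2
    have shrink : ∀ i : Fin n, (g:Fin n→X) i ≠ x₀ →
        ∃ Wf : Set X, IsOpen Wf ∧ (g:Fin n→X) i ∈ Wf ∧ Wf ⊆ U i ∧ x₀ ∉ closure Wf :=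
      fun i h => hx _ h (U i) (hUopen i) (hUmem i)
    choose Wf hWfopen hWfmem hWfsub hWfcl using shrink
    have hx0open : IsOpen (⋂ i, if (g:Fin n→X) i = x₀ then W i else univ) := by
      apply isOpen_iInter_of_finite
      intro i; split
      · exact hWopen i
      · exact isOpen_univ
    have hx0mem : x₀ ∈ (⋂ i, if (g:Fin n→X) i = x₀ then W i else univ) := by
      apply mem_iInter.mpr
      intro i
      split
      · next h => exact h ▸ hWmem i
      · trivial
    obtain ⟨V₀, hV₀, hV₀sub⟩ := h𝒱basis _ hx0open hx0mem
    set c : Fin n → Bool := fun i => decide ((g:Fin n→X) i = x₀) with hcdef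
    set V : Fin n → Set X :=
      fun i => if h : (g:Fin n→X) i = x₀ then V₀ else Wf i h with hVdef
    have hctrue : ∀ i, c i = true ↔ (g:Fin n→X) i = x₀ := by
      intro i; simp [hcdef]
    have hcfalse : ∀ i, c i = false ↔ (g:Fin n→X) i ≠ x₀ := by
      intro i; simp [hcdef]
    have hVsubW : ∀ i, V i ⊆ W i := by
      intro i
      simp only [hVdef]
      split
      · next h =>
        refine hV₀sub.trans ?_
        intro x hx'
        have := mem_iInter.mp hx' i
        simpa [h] using this
      · next h => exact (hWfsub i h).trans fun x hx' => hx'.1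
    refine ⟨_, ⟨V, c, ?_, ?_, ?_, ?_, rfl⟩, ?_, ?_⟩
    · intro i hi
      have h := (hctrue i).mp hi
      simp only [hVdef, dif_pos h]
      exact hV₀
    · intro i hi
      have h := (hcfalse i).mp hi
      simp only [hVdef, dif_neg h]
      exact ⟨hWfopen i h, hWfcl i h⟩
    · intro i j hij hi hj
      have hi' := (hcfalse i).mp hi
      have hj' := (hcfalse j).mp hj
      have hne' : (g:Fin n→X) i ≠ (g:Fin n→X) j := fun h =>
        hi' (gC1 i j hij h)
      simp only [hVdef, dif_neg hi', dif_neg hj']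
      exact (hUdisj i j hne').mono (hWfsub i hi') (hWfsub j hj')
    · intro i j hi hj
      simp only [hVdef, dif_pos ((hctrue i).mp hi), dif_pos ((hctrue j).mp hj)]
    · intro i _
      simp only [hVdef]
      split
      · next h =>
        rw [h]
        exact (h𝒱open V₀ hV₀).2
      · next h => exact hWfmem i h
    · intro f hf
      exact hWsub _ fun i => hVsubW i (hf i (mem_univ i))
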